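/- Let A and B be n×n complex positive definite matrices, let X be an n×n Hermitian matrix such that the 2n×2n block matrix [[A, X],[X, B]] is positive semidefinite, and let |||·||| be a unitarily invariant norm on n×n complex matrices. Then |||X||| ≤ |||A #_{1/2} B|||. -/

import Mathlib

/-!
The Schur complement of the block matrix gives `X A⁻¹ X ≤ B`. Conjugating by `A^{-1/2}`, the
Hermitian matrix `Z = A^{-1/2} X A^{-1/2}` satisfies `Z² ≤ R = A^{-1/2} B A^{-1/2}`, so operator
monotonicity of the square root gives `|Z| ≤ R^{1/2}`, i.e. `-R^{1/2} ≤ Z ≤ R^{1/2}`; conjugating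
back by `A^{1/2}` yields `-(A # B) ≤ X ≤ A # B`.

A unitarily invariant norm is monotone on positive semidefinite matrices: after an
`ε`-perturbation, `0 < S ≤ T` gives `S = M Mᴴ` and `Mᴴ M = D T D` with `D` a positive contraction,
`M Mᴴ` and `Mᴴ M` are unitarily similar, and `D` is an average of two unitaries. If `W` is the sign
of `X`, then `-G ≤ X ≤ G` gives `2 |X| ≤ G + W G W`, whence `|||X||| ≤ |||G|||`.
-/

open scoped BigOperators ComplexOrder

/-- `f` applied to a Hermitian matrix via the functional calculus:
if `A = U diag(λᵢ) U*` then `herFun f A = U diag(f λᵢ) U*`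
(junk value `0` if the matrix is not Hermitian). -/
noncomputable def herFun {n : ℕ} (f : ℝ → ℝ) (A : Matrix (Fin n) (Fin n) ℂ) :
    Matrix (Fin n) (Fin n) ℂ :=
  if hA : A.IsHermitian then
    (hA.eigenvectorUnitary : Matrix (Fin n) (Fin n) ℂ) *
      Matrix.diagonal (fun i => (f (hA.eigenvalues i) : ℂ)) *
      (star hA.eigenvectorUnitary : Matrix (Fin n) (Fin n) ℂ)
  else 0

/-- Real matrix power `A^r` of a Hermitian (e.g. positive definite) matrix,
via the functional calculus. -/
noncomputable def mpow {n : ℕ} (A : Matrix (Fin n) (Fin n) ℂ) (r : ℝ) :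
    Matrix (Fin n) (Fin n) ℂ :=
  herFun (fun x => x ^ r) A

/-- Matrix logarithm of a Hermitian (e.g. positive definite) matrix,
via the functional calculus. -/
noncomputable def mlog {n : ℕ} (A : Matrix (Fin n) (Fin n) ℂ) :
    Matrix (Fin n) (Fin n) ℂ :=
  herFun Real.log A

/-- Matrix exponential. -/
noncomputable def mexp {n : ℕ} (A : Matrix (Fin n) (Fin n) ℂ) :
    Matrix (Fin n) (Fin n) ℂ :=
  NormedSpace.exp A

/-- The `t`-geometric mean `A #_t B = A^{1/2} (A^{-1/2} B A^{-1/2})^t A^{1/2}`. -/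
noncomputable def gm {n : ℕ} (A B : Matrix (Fin n) (Fin n) ℂ) (t : ℝ) :
    Matrix (Fin n) (Fin n) ℂ :=
  mpow A (1/2) * mpow (mpow A (-(1/2)) * B * mpow A (-(1/2))) t * mpow A (1/2)

/-- `eigVal A j` is the `j`-th eigenvalue (`j = 0, …, n-1`) of the Hermitian matrix `A`,
ordered decreasingly: `eigVal A 0 ≥ eigVal A 1 ≥ ⋯ ≥ eigVal A (n-1)`
(junk value `0` if `A` is not Hermitian).  Thus `λ_j` of the paper is `eigVal A (j-1)`. -/
noncomputable def eigVal {n : ℕ} (A : Matrix (Fin n) (Fin n) ℂ) (j : Fin n) : ℝ :=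
  if hA : A.IsHermitian then (hA.eigenvalues ∘ Tuple.sort hA.eigenvalues) j.rev else 0

/-- `prodTopEig A k = ∏_{j=1}^k λ_j(A)`, the product of the `k` largest eigenvalues
of the Hermitian matrix `A`. -/
noncomputable def prodTopEig {n : ℕ} (A : Matrix (Fin n) (Fin n) ℂ) (k : ℕ) : ℝ :=
  ∏ j ∈ Finset.univ.filter (fun j : Fin n => (j : ℕ) < k), eigVal A j

/-- A unitarily invariant norm on `n × n` complex matrices: a norm `N`
with `N (U * X * V) = N X` for all unitaries `U, V`. -/
structure UnitarilyInvariantNorm (n : ℕ) where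
  N : Matrix (Fin n) (Fin n) ℂ → ℝ
  add_le : ∀ X Y, N (X + Y) ≤ N X + N Y
  smul_eq : ∀ (c : ℂ) (X), N (c • X) = ‖c‖ * N X
  eq_zero : ∀ X, N X = 0 → X = 0
  invariant : ∀ U V : Matrix.unitaryGroup (Fin n) ℂ, ∀ X,
    N ((U : Matrix (Fin n) (Fin n) ℂ) * X * (V : Matrix (Fin n) (Fin n) ℂ)) = N X

open scoped Matrix Matrix.Norms.L2Operator MatrixOrder

section FunctionalCalculus

variable {n : ℕ} {A : Matrix (Fin n) (Fin n) ℂ}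

lemma herFun_eq_cfc (hA : A.IsHermitian) (f : ℝ → ℝ) :
    herFun f A = cfc f A := by
  rw [herFun, dif_pos hA, hA.cfc_eq, Matrix.IsHermitian.cfc, Unitary.conjStarAlgAut_apply]
  rfl

lemma isHermitian_mpow (A : Matrix (Fin n) (Fin n) ℂ) (r : ℝ) : (mpow A r).IsHermitian := by
  by_cases hA : A.IsHermitian
  · rw [mpow, herFun_eq_cfc hA]
    exact cfc_predicate _ A
  · simp [mpow, herFun, hA]

lemma mpow_one (hA : A.IsHermitian) : mpow A 1 = A := by
  simp only [mpow, herFun_eq_cfc hA, Real.rpow_one]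
  exact cfc_id' ℝ A

lemma mpow_zero (hA : A.IsHermitian) : mpow A 0 = 1 := by
  simp only [mpow, herFun_eq_cfc hA, Real.rpow_zero]
  exact cfc_const_one ℝ A

lemma mpow_add (hA : A.PosDef) (r s : ℝ) :
    mpow A (r + s) = mpow A r * mpow A s := by
  simp only [mpow, herFun_eq_cfc hA.isHermitian]
  rw [← cfc_mul _ _ A (A.finite_real_spectrum.continuousOn _)
    (A.finite_real_spectrum.continuousOn _)]
  refine cfc_congr fun x hx => Real.rpow_add ?_ r s
  exact (Matrix.isStrictlyPositive_iff_posDef.mpr hA).spectrum_pos hx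

lemma mpow_half_eq_sqrt (hA : 0 ≤ A) :
    mpow A (1 / 2) = CFC.sqrt A := by
  rw [mpow, herFun_eq_cfc (Matrix.nonneg_iff_posSemidef.mp hA).isHermitian,
    CFC.sqrt_eq_real_sqrt A hA, cfcₙ_eq_cfc]
  exact cfc_congr (fun x _ => (Real.sqrt_eq_rpow x).symm : Set.EqOn _ _ (spectrum ℝ A))

lemma mpow_mul_mpow_neg (hA : A.PosDef) (r : ℝ) :
    mpow A r * mpow A (-r) = 1 := by
  rw [← mpow_add hA, add_neg_cancel, mpow_zero hA.isHermitian]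

lemma mpow_neg_mul_mpow (hA : A.PosDef) (r : ℝ) :
    mpow A (-r) * mpow A r = 1 := by
  rw [← mpow_add hA, neg_add_cancel, mpow_zero hA.isHermitian]

lemma mpow_half_mul_mpow_half (hA : A.PosDef) :
    mpow A (1 / 2) * mpow A (1 / 2) = A := by
  rw [← mpow_add hA]
  norm_num [mpow_one hA.isHermitian]

lemma mpow_neg_half_mul_mpow_neg_half (hA : A.PosDef) :
    mpow A (-(1 / 2)) * mpow A (-(1 / 2)) = A⁻¹ := by
  refine (Matrix.inv_eq_left_inv ?_).symm
  calc mpow A (-(1 / 2)) * mpow A (-(1 / 2)) * A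
      = mpow A (-(1 / 2)) * mpow A (-(1 / 2)) * mpow A 1 := by rw [mpow_one hA.isHermitian]
    _ = 1 := by rw [← mpow_add hA, ← mpow_add hA]; norm_num [mpow_zero hA.isHermitian]

lemma mpow_neg_half_mul_mul_mpow_neg_half (hA : A.PosDef) :
    mpow A (-(1 / 2)) * A * mpow A (-(1 / 2)) = 1 := by
  calc mpow A (-(1 / 2)) * A * mpow A (-(1 / 2))
      = mpow A (-(1 / 2)) * mpow A 1 * mpow A (-(1 / 2)) := by rw [mpow_one hA.isHermitian]
    _ = 1 := by rw [← mpow_add hA, ← mpow_add hA]; norm_num [mpow_zero hA.isHermitian]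

end FunctionalCalculus

lemma Matrix.IsHermitian.exists_sign {ι : Type*} [Fintype ι] [DecidableEq ι]
    {X : Matrix ι ι ℂ} (hX : X.IsHermitian) :
    ∃ W : Matrix ι ι ℂ, star W = W ∧ W * W = 1 ∧ Commute W X ∧ 0 ≤ W * X := by
  let sgn : ℝ → ℝ := fun x => if 0 ≤ x then 1 else -1
  have hcont (f : ℝ → ℝ) : ContinuousOn f (spectrum ℝ X) := X.finite_real_spectrum.continuousOn f
  refine ⟨cfc sgn X, (cfc_predicate sgn X).star_eq, ?_, (Commute.refl X).cfc_real sgn, ?_⟩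
  · rw [← cfc_mul _ _ X (hcont _) (hcont _), ← cfc_one ℝ X hX.isSelfAdjoint]
    exact cfc_congr fun x _ => by by_cases hx : 0 ≤ x <;> simp [sgn, hx]
  · nth_rw 2 [← cfc_id' ℝ X hX.isSelfAdjoint]
    rw [← cfc_mul _ _ X (hcont _) (hcont _)]
    exact cfc_nonneg fun x _ => by simp only [sgn]; split_ifs <;> linarith

section CStarAlgebra

variable {𝔄 : Type*} [CStarAlgebra 𝔄] [PartialOrder 𝔄] [StarOrderedRing 𝔄]

lemma IsSelfAdjoint.neg_sqrt_le_and_le_sqrt {z r : 𝔄} (hz : IsSelfAdjoint z) (h : z * z ≤ r) :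
    -CFC.sqrt r ≤ z ∧ z ≤ CFC.sqrt r := by
  have habs : CFC.abs z ≤ CFC.sqrt r := by
    rw [CFC.abs, hz.star_eq]
    exact CFC.sqrt_le_sqrt _ _ h
  constructor
  · have : 0 ≤ CFC.abs z + z := by
      rw [CFC.abs_add_self z hz]
      exact nsmul_nonneg (CFC.posPart_nonneg z) 2
    exact (neg_le_neg habs).trans (neg_le_iff_add_nonneg'.mpr this)
  · have : 0 ≤ CFC.abs z - z := by
      rw [CFC.abs_sub_self z hz]
      exact nsmul_nonneg (CFC.negPart_nonneg z) 2
    exact (sub_nonneg.mp this).trans habs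

end CStarAlgebra

section GeometricMean

variable {n : ℕ}

theorem neg_gm_le_and_le_gm_of_posSemidef_fromBlocks {A B X : Matrix (Fin n) (Fin n) ℂ}
    (hA : A.PosDef) (hX : X.IsHermitian) (hAXB : (Matrix.fromBlocks A X X B).PosSemidef) :
    -gm A B (1 / 2) ≤ X ∧ X ≤ gm A B (1 / 2) := by
  set s := mpow A (-(1 / 2))
  set t := mpow A (1 / 2)
  have hs : star s = s := (isHermitian_mpow A _).eq
  have ht : star t = t := (isHermitian_mpow A _).eq
  have hst : s * t = 1 := mpow_neg_mul_mpow hA _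
  have hts : t * s = 1 := mpow_mul_mpow_neg hA _
  have hss : s * s = A⁻¹ := mpow_neg_half_mul_mpow_neg_half hA
  have hschur : 0 ≤ B - X * A⁻¹ * X := by
    have := hA.isUnit.invertible
    have h := (Matrix.PosDef.fromBlocks₁₁ X B hA).mp (by rwa [hX.eq])
    rw [hX.eq] at h
    exact h.nonneg
  set Z := s * X * s
  set R := s * B * s
  have hZ : IsSelfAdjoint Z := by
    simp only [Z, IsSelfAdjoint, star_mul, hs, hX.isSelfAdjoint.star_eq, mul_assoc]
  have hZR : Z * Z ≤ R := by
    have h := star_left_conjugate_nonneg hschur s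
    have hRZ : s * (B - X * A⁻¹ * X) * s = R - Z * Z := by
      rw [← hss]
      simp only [R, Z]
      noncomm_ring
    rw [hs, hRZ] at h
    exact sub_nonneg.mp h
  have hR : 0 ≤ R := (hZ.star_eq ▸ star_mul_self_nonneg Z).trans hZR
  have hgm : gm A B (1 / 2) = t * CFC.sqrt R * t := by rw [gm, mpow_half_eq_sqrt hR]
  have htZt : t * Z * t = X := by
    simp only [Z, ← mul_assoc, hts]
    rw [mul_assoc, hst, one_mul, mul_one]
  obtain ⟨hlow, hupp⟩ := hZ.neg_sqrt_le_and_le_sqrt hZR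
  have hlow' := star_left_conjugate_le_conjugate hlow t
  have hupp' := star_left_conjugate_le_conjugate hupp t
  rw [ht, htZt] at hlow' hupp'
  rw [hgm]
  exact ⟨by simpa using hlow', hupp'⟩

end GeometricMean

namespace UnitarilyInvariantNorm

variable {n : ℕ} (ν : UnitarilyInvariantNorm n)

lemma map_zero : ν.N 0 = 0 := by simpa using ν.smul_eq 0 0

lemma map_neg (X : Matrix (Fin n) (Fin n) ℂ) : ν.N (-X) = ν.N X := by
  simpa using ν.smul_eq (-1) X

lemma nonneg (X : Matrix (Fin n) (Fin n) ℂ) : 0 ≤ ν.N X := by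
  have h := ν.add_le X (-X)
  rw [add_neg_cancel, map_zero, map_neg] at h
  linarith

lemma map_mul_mul_unitary {U V : Matrix (Fin n) (Fin n) ℂ} (hU : U ∈ Matrix.unitaryGroup (Fin n) ℂ)
    (hV : V ∈ Matrix.unitaryGroup (Fin n) ℂ) (X : Matrix (Fin n) (Fin n) ℂ) :
    ν.N (U * X * V) = ν.N X :=
  ν.invariant ⟨U, hU⟩ ⟨V, hV⟩ X

lemma map_unitary_mul {U : Matrix (Fin n) (Fin n) ℂ} (hU : U ∈ Matrix.unitaryGroup (Fin n) ℂ)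
    (X : Matrix (Fin n) (Fin n) ℂ) : ν.N (U * X) = ν.N X := by
  simpa using ν.map_mul_mul_unitary hU (one_mem _) X

lemma map_nsmul (k : ℕ) (X : Matrix (Fin n) (Fin n) ℂ) : ν.N (k • X) = k * ν.N X := by
  rw [← Nat.cast_smul_eq_nsmul ℂ, ν.smul_eq, Complex.norm_natCast]

lemma map_mul_mul_le_of_mul_self_le_one {D : Matrix (Fin n) (Fin n) ℂ} (hD : D.IsHermitian)
    (hD1 : D * D ≤ 1) (Y : Matrix (Fin n) (Fin n) ℂ) : ν.N (D * Y * D) ≤ ν.N Y := by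
  have hDE : Commute (CFC.sqrt (1 - D * D)) D := by
    rw [CFC.sqrt_eq_cfc]
    exact ((Commute.one_left D).sub_left ((Commute.refl D).mul_left (Commute.refl D))).cfc_nnreal _
  have hEE : CFC.sqrt (1 - D * D) * CFC.sqrt (1 - D * D) = 1 - D * D :=
    CFC.sqrt_mul_sqrt_self _ (sub_nonneg.mpr hD1)
  have hE : star (CFC.sqrt (1 - D * D)) = CFC.sqrt (1 - D * D) :=
    (CFC.sqrt_nonneg _).isSelfAdjoint.star_eq
  -- `D` is the average of the unitaries `D ± i (1 - D²)^{1/2}`.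
  set F := Complex.I • CFC.sqrt (1 - D * D)
  have hF : star F = -F := by simp [F, star_smul, hE]
  have hFF : F * F = D * D - 1 := by
    simp only [F, smul_mul_smul_comm, Complex.I_mul_I, hEE, neg_one_smul, neg_sub]
  have hFD : F * D = D * F := by simp only [F, smul_mul_assoc, mul_smul_comm, hDE.eq]
  set U := D + F
  have hU' : star U = D - F := by
    simp [U, star_add, hD.isSelfAdjoint.star_eq, hF, sub_eq_add_neg]
  have hU : U ∈ Matrix.unitaryGroup (Fin n) ℂ := by
    rw [Matrix.mem_unitaryGroup_iff', hU']
    calc (D - F) * (D + F) = D * D - F * F + (D * F - F * D) := by noncomm_ring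
      _ = 1 := by rw [hFD, hFF]; noncomm_ring
  have hU'' : star U ∈ Matrix.unitaryGroup (Fin n) ℂ := Unitary.star_mem hU
  have h4 : 4 • (D * Y * D)
      = U * Y * U + U * Y * star U + star U * Y * U + star U * Y * star U := by
    rw [hU']
    simp only [U]
    noncomm_ring
  have h₁ := ν.add_le (U * Y * U + U * Y * star U + star U * Y * U) (star U * Y * star U)
  have h₂ := ν.add_le (U * Y * U + U * Y * star U) (star U * Y * U)
  have h₃ := ν.add_le (U * Y * U) (U * Y * star U)
  have h4N := ν.map_nsmul 4 (D * Y * D)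
  rw [ν.map_mul_mul_unitary hU hU, ν.map_mul_mul_unitary hU hU''] at h₃
  rw [ν.map_mul_mul_unitary hU'' hU] at h₂
  rw [ν.map_mul_mul_unitary hU'' hU'', ← h4] at h₁
  push_cast at h4N
  linarith

lemma map_mul_conjTranspose_eq_map_conjTranspose_mul {M : Matrix (Fin n) (Fin n) ℂ}
    (hM : IsUnit M) : ν.N (M * Mᴴ) = ν.N (Mᴴ * M) := by
  have hP : (Mᴴ * M).PosDef :=
    Matrix.PosDef.conjTranspose_mul_self M (Matrix.mulVec_injective_iff_isUnit.mpr hM)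
  -- `M q` is the unitary factor in the polar decomposition `M = (M q) (Mᴴ M)^{1/2}`.
  set q := mpow (Mᴴ * M) (-(1 / 2))
  have hq : star q = q := (isHermitian_mpow _ _).eq
  have hqPq : q * (Mᴴ * M) * q = 1 := mpow_neg_half_mul_mul_mpow_neg_half hP
  have hV : M * q ∈ Matrix.unitaryGroup (Fin n) ℂ := by
    rw [Matrix.mem_unitaryGroup_iff', star_mul, hq, Matrix.star_eq_conjTranspose]
    simpa only [mul_assoc] using hqPq
  calc ν.N (M * Mᴴ) = ν.N (M * (q * (Mᴴ * M) * q) * Mᴴ) := by rw [hqPq, mul_one]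
    _ = ν.N (M * q * (Mᴴ * M) * star (M * q)) := by
        rw [star_mul, hq, Matrix.star_eq_conjTranspose]
        simp only [mul_assoc]
    _ = ν.N (Mᴴ * M) := ν.map_mul_mul_unitary hV (Unitary.star_mem hV) _

lemma map_le_map_of_posDef {S T : Matrix (Fin n) (Fin n) ℂ} (hS : S.PosDef) (hT : T.PosDef)
    (hST : S ≤ T) : ν.N S ≤ ν.N T := by
  set s := mpow T (-(1 / 2))
  set t := mpow T (1 / 2)
  have hs : sᴴ = s := (isHermitian_mpow T _).eq
  have ht : tᴴ = t := (isHermitian_mpow T _).eq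
  have hts : t * s = 1 := mpow_mul_mpow_neg hT _
  have hst : s * t = 1 := mpow_neg_mul_mpow hT _
  set C := s * S * s
  have hC : C.PosDef := by
    have := hS.conjTranspose_mul_mul_same
      (Matrix.mulVec_injective_iff_isUnit.mpr ⟨⟨s, t, hst, hts⟩, rfl⟩)
    rwa [hs] at this
  have hC1 : C ≤ 1 := by
    have := star_left_conjugate_le_conjugate hST s
    rwa [Matrix.star_eq_conjTranspose, hs, mpow_neg_half_mul_mul_mpow_neg_half hT] at this
  set D := mpow C (1 / 2)
  have hD : Dᴴ = D := (isHermitian_mpow C _).eq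
  have hDD : D * D = C := mpow_half_mul_mpow_half hC
  have hM : IsUnit (t * D) :=
    (Units.mk t s hts hst).isUnit.mul
      (Units.mk D _ (mpow_mul_mpow_neg hC _) (mpow_neg_mul_mpow hC _)).isUnit
  have hMM : t * D * (t * D)ᴴ = S := by
    rw [Matrix.conjTranspose_mul, hD, ht]
    calc t * D * (D * t) = t * (D * D) * t := by simp only [mul_assoc]
      _ = (t * s) * S * (s * t) := by rw [hDD]; simp only [C, mul_assoc]
      _ = S := by rw [hts, hst, one_mul, mul_one]
  have hMM' : (t * D)ᴴ * (t * D) = D * T * D := by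
    rw [Matrix.conjTranspose_mul, hD, ht, ← mpow_half_mul_mpow_half hT]
    simp only [t, mul_assoc]
  calc ν.N S = ν.N ((t * D)ᴴ * (t * D)) := by
        rw [← ν.map_mul_conjTranspose_eq_map_conjTranspose_mul hM, hMM]
    _ = ν.N (D * T * D) := by rw [hMM']
    _ ≤ ν.N T := ν.map_mul_mul_le_of_mul_self_le_one (isHermitian_mpow C _) (hDD.symm ▸ hC1) T

lemma map_le_map_of_nonneg {S T : Matrix (Fin n) (Fin n) ℂ} (hS : 0 ≤ S) (hST : S ≤ T) :
    ν.N S ≤ ν.N T := by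
  have hT : 0 ≤ T := hS.trans hST
  have key : ∀ ε : ℝ, 0 < ε → ν.N S ≤ ν.N T + ε * (2 * ν.N 1) := by
    intro ε hε
    have hE : (ε • (1 : Matrix (Fin n) (Fin n) ℂ)).PosDef := Matrix.PosDef.one.smul hε
    have hNE : ν.N (ε • 1) = ε * ν.N 1 := by
      rw [← Complex.coe_smul, ν.smul_eq, Complex.norm_real, Real.norm_of_nonneg hε.le]
    have h₁ := ν.add_le (S + ε • 1) (-(ε • 1))
    have h₂ := ν.map_le_map_of_posDef (.posSemidef_add (Matrix.nonneg_iff_posSemidef.mp hS) hE)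
      (.posSemidef_add (Matrix.nonneg_iff_posSemidef.mp hT) hE) (add_le_add_left hST _)
    have h₃ := ν.add_le T (ε • 1)
    rw [add_neg_cancel_right, map_neg] at h₁
    linarith
  refine le_of_forall_pos_le_add fun δ hδ => ?_
  have hc : 0 < 2 * ν.N 1 + 1 := by linarith [ν.nonneg 1]
  have := key (δ / (2 * ν.N 1 + 1)) (div_pos hδ hc)
  have : δ / (2 * ν.N 1 + 1) * (2 * ν.N 1) ≤ δ := by
    rw [div_mul_eq_mul_div, div_le_iff₀ hc]
    nlinarith
  linarith

lemma map_le_of_neg_le_of_le {X G : Matrix (Fin n) (Fin n) ℂ} (hX : X.IsHermitian)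
    (hlow : -G ≤ X) (hupp : X ≤ G) : ν.N X ≤ ν.N G := by
  obtain ⟨W, hW, hWW, hWX, habs⟩ := hX.exists_sign
  have hWu : W ∈ Matrix.unitaryGroup (Fin n) ℂ := by rw [Matrix.mem_unitaryGroup_iff', hW, hWW]
  have hP := star_left_conjugate_nonneg (sub_nonneg.mpr hupp) (1 + W)
  have hQ := star_left_conjugate_nonneg (sub_nonneg.mpr hlow) (1 - W)
  rw [star_add, star_one, hW] at hP
  rw [star_sub, star_one, hW, sub_neg_eq_add] at hQ
  -- `W X = |X|`, and `2 (G + W G W) - 4 |X|` is the sum of the conjugates of `G ∓ X` by `1 ± W`.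
  have hle : 4 • (W * X) ≤ 2 • (G + W * G * W) := by
    rw [← sub_nonneg]
    calc 0 ≤ (1 + W) * (G - X) * (1 + W) + (1 - W) * (X + G) * (1 - W) := add_nonneg hP hQ
      _ = 2 • (G + W * G * W) - 2 • (W * X) - 2 • (X * W) := by noncomm_ring
      _ = 2 • (G + W * G * W) - 4 • (W * X) := by rw [← hWX.eq]; abel
  have h := ν.map_le_map_of_nonneg (nsmul_nonneg habs 4) hle
  rw [ν.map_nsmul, ν.map_nsmul, ν.map_unitary_mul hWu] at h
  have := ν.add_le G (W * G * W)
  rw [ν.map_mul_mul_unitary hWu hWu] at this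
  push_cast at h
  linarith

end UnitarilyInvariantNorm

theorem stmt17_general {n : ℕ} (A B X : Matrix (Fin n) (Fin n) ℂ) (hA : A.PosDef)
    (hX : X.IsHermitian) (hblock : (Matrix.fromBlocks A X X B).PosSemidef)
    (NN : UnitarilyInvariantNorm n) :
    NN.N X ≤ NN.N (gm A B (1 / 2)) := by
  obtain ⟨hlow, hupp⟩ := neg_gm_le_and_le_gm_of_posSemidef_fromBlocks hA hX hblock
  exact NN.map_le_of_neg_le_of_le hX hlow hupp

/-- if `A, B` are positive definite, `X` is Hermitian, and the block matrix
`[[A, X], [X, B]]` is positive semidefinite, then `|||X||| ≤ |||A #_{1/2} B|||` for every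
unitarily invariant norm. -/
theorem stmt17 {n : ℕ} (A B X : Matrix (Fin n) (Fin n) ℂ) (hA : A.PosDef) (hB : B.PosDef)
    (hX : X.IsHermitian) (hblock : (Matrix.fromBlocks A X X B).PosSemidef)
    (NN : UnitarilyInvariantNorm n) :
    NN.N X ≤ NN.N (gm A B (1 / 2)) :=
  stmt17_general A B X hA hX hblock NN
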